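/- arXiv:2101.01757 — 2 statements merged into one kernel-verified Lean document; each statement's English description precedes it below -/
import Mathlib

section
/- Let s, k, u, ℓ be integers with s ≥ 1, k ≥ 2, 1 ≤ u ≤ s, and 2 ≤ ℓ < k. Then every (k,u)-intersecting s-uniform family 𝓕 can be written as the union of at most ⌈((k−1)/(ℓ−1))·C(s,u)⌉ subfamilies, each of which is (ℓ,u)-intersecting. (In particular the parameter N^{(u)}_{k,ℓ}(s), the smallest r such that every (k,u)-intersecting s-uniform family is a union of at most r (ℓ,u)-intersecting subfamilies, exists and satisfies N^{(u)}_{k,ℓ}(s) ≤ ⌈((k−1)/(ℓ−1))·C(s,u)⌉.) -/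
/-- An `s`-uniform family: every member has exactly `s` elements. -/
def IsUniform {α : Type*} (s : ℕ) (𝓕 : Finset (Finset α)) : Prop :=
  ∀ F ∈ 𝓕, F.card = s

/-- A family `𝓕` is `(k,u)`-intersecting if among any `k` pairwise distinct members
`A₁, …, A_k` there are indices `i < j` with `|A_i ∩ A_j| ≥ u`. -/
def IsKUIntersecting {α : Type*} [DecidableEq α] (k u : ℕ)
    (𝓕 : Finset (Finset α)) : Prop :=
  ∀ A : Fin k → Finset α, (∀ i, A i ∈ 𝓕) → Function.Injective A →
    ∃ i j : Fin k, i < j ∧ u ≤ ((A i) ∩ (A j)).card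

/-- Every `(k,u)`-intersecting `s`-uniform family is the union of at most
`⌈((k-1)/(ℓ-1)) · C(s,u)⌉` subfamilies, each `(ℓ,u)`-intersecting. -/
theorem union_of_lu_intersecting_subfamilies {α : Type*} [DecidableEq α]
    (s k u ℓ : ℕ) (hs : 1 ≤ s) (hk : 2 ≤ k) (hu1 : 1 ≤ u) (hus : u ≤ s)
    (hℓ : 2 ≤ ℓ) (hℓk : ℓ < k)
    (𝓕 : Finset (Finset α)) (hunif : IsUniform s 𝓕)
    (hint : IsKUIntersecting k u 𝓕) :
    ∃ (n : ℕ) (𝓖 : Fin n → Finset (Finset α)),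
      n ≤ ⌈((k - 1 : ℚ) / (ℓ - 1)) * (s.choose u)⌉₊ ∧
      (∀ i, 𝓖 i ⊆ 𝓕) ∧
      (∀ i, IsKUIntersecting ℓ u (𝓖 i)) ∧
      𝓕 = Finset.univ.biUnion 𝓖 := by
  classical
  set d := ℓ - 1 with hd_def
  have hd : 0 < d := by omega
  -- maximal pairwise u-disjoint subfamily M
  set S : Finset (Finset (Finset α)) :=
    𝓕.powerset.filter (fun M => ∀ A ∈ M, ∀ B ∈ M, A ≠ B → (A ∩ B).card < u) with hS
  have hSne : S.Nonempty := ⟨∅, by simp [hS]⟩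
  obtain ⟨M, hMS, hMmax⟩ := S.exists_max_image Finset.card hSne
  rw [hS, Finset.mem_filter, Finset.mem_powerset] at hMS
  obtain ⟨hM𝓕, hMpd⟩ := hMS
  -- |M| ≤ k - 1
  have hMcard : M.card ≤ k - 1 := by
    by_contra hcon
    have hk' : k ≤ M.card := by omega
    obtain ⟨M', hM'M, hM'card⟩ := Finset.exists_subset_card_eq (s := M) (n := k) hk'
    set A : Fin k → Finset α :=
      fun i => (M'.equivFin.symm ⟨i.val, by rw [hM'card]; exact i.2⟩ : Finset α) with hA
    have hAmem : ∀ i, A i ∈ M' := fun i => (M'.equivFin.symm _).2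
    have hAinj : Function.Injective A := by
      intro i j hij
      have h1 : M'.equivFin.symm ⟨i.val, by rw [hM'card]; exact i.2⟩ =
          M'.equivFin.symm ⟨j.val, by rw [hM'card]; exact j.2⟩ := by
        apply Subtype.ext; exact hij
      have h2 := M'.equivFin.symm.injective h1
      have h3 : i.val = j.val := by simpa using h2
      exact Fin.ext h3
    obtain ⟨i, j, hij, hcard⟩ := hint A (fun i => hM𝓕 (hM'M (hAmem i))) hAinj
    have hne : A i ≠ A j := fun h => absurd (hAinj h) (Fin.ne_of_lt hij)
    exact absurd hcard (by
      have := hMpd (A i) (hM'M (hAmem i)) (A j) (hM'M (hAmem j)) hne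
      omega)
  -- maximality: every A ∈ 𝓕 has a large intersection with some member of M
  have hcov0 : ∀ A ∈ 𝓕, ∃ B ∈ M, u ≤ (A ∩ B).card := by
    intro A hA
    by_contra hcon
    push_neg at hcon
    have hAM : A ∉ M := by
      intro hAM
      have := hcon A hAM
      rw [Finset.inter_self, hunif A hA] at this
      omega
    have hins : insert A M ∈ S := by
      rw [hS, Finset.mem_filter, Finset.mem_powerset]
      refine ⟨Finset.insert_subset hA hM𝓕, ?_⟩
      intro X hX Y hY hXY
      rcases Finset.mem_insert.1 hX with hXA | hX'
      · rcases Finset.mem_insert.1 hY with hYA | hY'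
        · exact absurd (hXA.trans hYA.symm) hXY
        · rw [hXA]; exact hcon Y hY'
      · rcases Finset.mem_insert.1 hY with hYA | hY'
        · rw [hYA, Finset.inter_comm]; exact hcon X hX'
        · exact hMpd X hX' Y hY' hXY
    have := hMmax _ hins
    rw [Finset.card_insert_of_notMem hAM] at this
    omega
  -- the set of u-subsets of members of M
  set T : Finset (Finset α) := M.biUnion (fun B => Finset.powersetCard u B) with hT
  set m : ℕ := T.card with hm
  have hmle : m ≤ (k - 1) * s.choose u := by
    calc m ≤ ∑ B ∈ M, (Finset.powersetCard u B).card := Finset.card_biUnion_le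
    _ = ∑ B ∈ M, s.choose u := by
        apply Finset.sum_congr rfl
        intro B hB
        rw [Finset.card_powersetCard, hunif B (hM𝓕 hB)]
    _ = M.card * s.choose u := by rw [Finset.sum_const, smul_eq_mul]
    _ ≤ (k - 1) * s.choose u := Nat.mul_le_mul_right _ hMcard
  have hTcov : ∀ A ∈ 𝓕, ∃ t, t ∈ T ∧ t ⊆ A ∧ t.card = u := by
    intro A hA
    obtain ⟨B, hB, hcard⟩ := hcov0 A hA
    obtain ⟨t, htAB, htcard⟩ := Finset.exists_subset_card_eq (s := A ∩ B) (n := u) hcard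
    refine ⟨t, ?_, fun x hx => (Finset.mem_inter.1 (htAB hx)).1, htcard⟩
    rw [hT, Finset.mem_biUnion]
    exact ⟨B, hB, Finset.mem_powersetCard.2
      ⟨fun x hx => (Finset.mem_inter.1 (htAB hx)).2, htcard⟩⟩
  choose! τ hτT hτA hτcard using hTcov
  -- an injective indexing of T by numbers < m
  obtain ⟨ι, hιlt, hιinj⟩ :
      ∃ ι : Finset α → ℕ, (∀ t ∈ T, ι t < m) ∧
        ∀ t ∈ T, ∀ t' ∈ T, ι t = ι t' → t = t' := by
    refine ⟨fun t => if h : t ∈ T then (T.equivFin ⟨t, h⟩).val else 0, ?_, ?_⟩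
    · intro t ht; simp only [dif_pos ht]; exact (T.equivFin ⟨t, ht⟩).2
    · intro t ht t' ht' hee
      simp only [dif_pos ht, dif_pos ht'] at hee
      have := T.equivFin.injective (Fin.ext hee)
      exact Subtype.ext_iff.1 this
  set n : ℕ := m ⌈/⌉ d with hn
  have hmnd : m ≤ d * n := le_smul_ceilDiv hd
  set g : Finset α → ℕ := fun A => ι (τ A) / d with hg
  have hglt : ∀ A ∈ 𝓕, g A < n := by
    intro A hA
    show ι (τ A) / d < n
    rw [Nat.div_lt_iff_lt_mul hd]
    have := hιlt (τ A) (hτT A hA)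
    calc ι (τ A) < m := this
    _ ≤ d * n := hmnd
    _ = n * d := mul_comm _ _
  set 𝓖 : Fin n → Finset (Finset α) := fun i => 𝓕.filter (fun A => g A = i.val) with h𝓖
  refine ⟨n, 𝓖, ?_, fun i => Finset.filter_subset _ _, ?_, ?_⟩
  · -- the bound on n
    set C : ℕ := ⌈((k - 1 : ℚ) / (ℓ - 1)) * (s.choose u)⌉₊ with hC
    rw [hn, ceilDiv_le_iff_le_mul hd]
    have hle : ((k - 1 : ℕ) * s.choose u : ℚ) ≤ (d : ℚ) * C := by
      have h1 : ((k - 1 : ℚ) / (ℓ - 1)) * (s.choose u) ≤ (C : ℚ) := Nat.le_ceil _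
      have hdℚ : (0 : ℚ) < (ℓ : ℚ) - 1 := by
        have : (2 : ℚ) ≤ (ℓ : ℚ) := by exact_mod_cast hℓ
        linarith
      have h2 : ((k - 1 : ℚ)) * (s.choose u) ≤ ((ℓ : ℚ) - 1) * C := by
        rw [div_mul_eq_mul_div, div_le_iff₀ hdℚ] at h1
        linarith [h1]
      have hcast1 : ((k - 1 : ℕ) : ℚ) = (k : ℚ) - 1 := by
        rw [Nat.cast_sub (by omega : 1 ≤ k), Nat.cast_one]
      have hcast2 : ((d : ℕ) : ℚ) = (ℓ : ℚ) - 1 := by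
        rw [hd_def, Nat.cast_sub (by omega : 1 ≤ ℓ), Nat.cast_one]
      rw [hcast2]
      push_cast
      rw [hcast1]
      push_cast at h2
      linarith
    have : (k - 1) * s.choose u ≤ d * C := by exact_mod_cast hle
    omega
  · -- each part is (ℓ,u)-intersecting
    intro i A hA hAinj
    have hmem : ∀ r, A r ∈ 𝓕 ∧ g (A r) = i.val := by
      intro r
      have := hA r
      rw [h𝓖, Finset.mem_filter] at this
      exact this
    -- pigeonhole on ι ∘ τ ∘ A, whose values lie in an interval of length d < ℓ
    have hmaps : ∀ r : Fin ℓ, r ∈ (Finset.univ : Finset (Fin ℓ)) →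
        ι (τ (A r)) ∈ Finset.Ico (i.val * d) (i.val * d + d) := by
      intro r _
      obtain ⟨hr𝓕, hgr0⟩ := hmem r
      have hgr : ι (τ (A r)) / d = i.val := hgr0
      rw [Finset.mem_Ico]
      constructor
      · calc i.val * d = ι (τ (A r)) / d * d := by rw [hgr]
        _ ≤ ι (τ (A r)) := Nat.div_mul_le_self _ _
      · have : ι (τ (A r)) / d < i.val + 1 := by rw [hgr]; exact Nat.lt_succ_self _
        rw [Nat.div_lt_iff_lt_mul hd] at this
        calc ι (τ (A r)) < (i.val + 1) * d := this
        _ = i.val * d + d := by ring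
    have hcards : (Finset.Ico (i.val * d) (i.val * d + d)).card <
        (Finset.univ : Finset (Fin ℓ)).card := by
      rw [Nat.card_Ico, Finset.card_univ, Fintype.card_fin]
      omega
    obtain ⟨r, _, r', _, hne, heq⟩ :=
      Finset.exists_ne_map_eq_of_card_lt_of_maps_to hcards hmaps
    have hr𝓕 := (hmem r).1
    have hr'𝓕 := (hmem r').1
    have hττ : τ (A r) = τ (A r') :=
      hιinj _ (hτT _ hr𝓕) _ (hτT _ hr'𝓕) heq
    have hsub : τ (A r) ⊆ A r ∩ A r' := by
      apply Finset.subset_inter (hτA _ hr𝓕)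
      rw [hττ]; exact hτA _ hr'𝓕
    have hu : u ≤ (A r ∩ A r').card := by
      calc u = (τ (A r)).card := (hτcard _ hr𝓕).symm
      _ ≤ (A r ∩ A r').card := Finset.card_le_card hsub
    rcases lt_or_gt_of_ne hne with hlt | hlt
    · exact ⟨r, r', hlt, hu⟩
    · exact ⟨r', r, hlt, by rwa [Finset.inter_comm]⟩
  · -- the cover
    ext A
    simp only [Finset.mem_biUnion, Finset.mem_univ, true_and]
    constructor
    · intro hA
      exact ⟨⟨g A, hglt A hA⟩, by rw [h𝓖]; exact Finset.mem_filter.2 ⟨hA, rfl⟩⟩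
    · rintro ⟨i, hi⟩
      rw [h𝓖] at hi
      exact (Finset.mem_filter.1 hi).1
end

section
/- Let s, k, u be integers with s ≥ 1, k ≥ 2, and 1 ≤ u ≤ s. Then every (k,u)-intersecting s-uniform family 𝓕 can be written as the union of at most (k−1)·C(s,u) subfamilies, each of which is (2,u)-intersecting. -/
/-- Every `(k,u)`-intersecting `s`-uniform family is the union of at most
`(k-1) · C(s,u)` subfamilies, each `(2,u)`-intersecting. -/
theorem union_of_2u_intersecting_subfamilies {α : Type*} [DecidableEq α]
    (s k u : ℕ) (hs : 1 ≤ s) (hk : 2 ≤ k) (hu1 : 1 ≤ u) (hus : u ≤ s)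
    (𝓕 : Finset (Finset α)) (hunif : IsUniform s 𝓕)
    (hint : IsKUIntersecting k u 𝓕) :
    ∃ (n : ℕ) (𝓖 : Fin n → Finset (Finset α)),
      n ≤ (k - 1) * s.choose u ∧
      (∀ i, 𝓖 i ⊆ 𝓕) ∧
      (∀ i, IsKUIntersecting 2 u (𝓖 i)) ∧
      𝓕 = Finset.univ.biUnion 𝓖 := by
  classical
  -- the collection of "pairwise-bad" subfamilies
  set C : Finset (Finset (Finset α)) :=
    𝓕.powerset.filter (fun T => ∀ X ∈ T, ∀ Y ∈ T, X ≠ Y → ((X ∩ Y).card < u)) with hC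
  have hCne : C.Nonempty := ⟨∅, by simp [hC]⟩
  obtain ⟨M, hMC, hMmax⟩ := C.exists_max_image Finset.card hCne
  rw [hC, Finset.mem_filter, Finset.mem_powerset] at hMC
  obtain ⟨hM𝓕, hMbad⟩ := hMC
  -- M has at most k-1 members
  have hMk : M.card ≤ k - 1 := by
    by_contra h
    push_neg at h
    have hkM : k ≤ M.card := by omega
    obtain ⟨T, hTM, hTcard⟩ := Finset.exists_subset_card_eq hkM
    let e := T.equivFinOfCardEq hTcard
    set A : Fin k → Finset α := fun i => ((e.symm i : T) : Finset α) with hA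
    have hAmem : ∀ i, A i ∈ 𝓕 := fun i => hM𝓕 (hTM (e.symm i).2)
    have hAinj : Function.Injective A := by
      intro i j hij
      have : e.symm i = e.symm j := Subtype.ext hij
      exact e.symm.injective this
    obtain ⟨i, j, hij, hcard⟩ := hint A hAmem hAinj
    exact absurd hcard (Nat.not_le.mpr
      (hMbad (A i) (hTM (e.symm i).2) (A j) (hTM (e.symm j).2)
        (fun hEq => (ne_of_lt hij) (hAinj hEq))))
  -- every F ∈ 𝓕 meets some member of M in at least u elements
  have hcov : ∀ F ∈ 𝓕, ∃ A ∈ M, u ≤ (F ∩ A).card := by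
    intro F hF
    by_cases hFM : F ∈ M
    · exact ⟨F, hFM, by simpa [Finset.inter_self, hunif F hF] using hus⟩
    · have hnot : ¬ (∀ X ∈ insert F M, ∀ Y ∈ insert F M, X ≠ Y → ((X ∩ Y).card < u)) := by
        intro hgood
        have hmem : insert F M ∈ C := by
          rw [hC, Finset.mem_filter, Finset.mem_powerset]
          exact ⟨Finset.insert_subset hF hM𝓕, hgood⟩
        have := hMmax _ hmem
        rw [Finset.card_insert_of_notMem hFM] at this
        omega
      push_neg at hnot
      obtain ⟨X, hX, Y, hY, hXY, hcard⟩ := hnot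
      rw [Finset.mem_insert] at hX hY
      rcases hX with rfl | hXM
      · rcases hY with rfl | hYM
        · exact absurd rfl hXY
        · exact ⟨Y, hYM, hcard⟩
      · rcases hY with rfl | hYM
        · exact ⟨X, hXM, by rwa [Finset.inter_comm]⟩
        · exact absurd hcard (Nat.not_le.mpr (hMbad X hXM Y hYM hXY))
  -- the collection of u-subsets of members of M
  set S : Finset (Finset α) := M.biUnion (fun A => A.powersetCard u) with hS
  have hScard : S.card ≤ (k - 1) * s.choose u := by
    calc S.card ≤ ∑ A ∈ M, (A.powersetCard u).card := Finset.card_biUnion_le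
      _ = ∑ A ∈ M, s.choose u := by
          apply Finset.sum_congr rfl
          intro A hA
          rw [Finset.card_powersetCard, hunif A (hM𝓕 hA)]
      _ = M.card * s.choose u := by rw [Finset.sum_const, smul_eq_mul]
      _ ≤ (k - 1) * s.choose u := Nat.mul_le_mul_right _ hMk
  let e := S.equivFin
  refine ⟨S.card, fun i => 𝓕.filter (fun F => ((e.symm i : S) : Finset α) ⊆ F),
    hScard, fun i => Finset.filter_subset _ _, ?_, ?_⟩
  · -- each class is (2,u)-intersecting
    intro i A hAmem hAinj
    refine ⟨0, 1, by decide, ?_⟩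
    set U : Finset α := ((e.symm i : S) : Finset α) with hU
    have hUS : U ∈ S := (e.symm i).2
    rw [hS, Finset.mem_biUnion] at hUS
    obtain ⟨B, _, hUB⟩ := hUS
    rw [Finset.mem_powersetCard] at hUB
    have h0 := (Finset.mem_filter.mp (hAmem 0)).2
    have h1 := (Finset.mem_filter.mp (hAmem 1)).2
    calc u = U.card := hUB.2.symm
      _ ≤ (A 0 ∩ A 1).card := Finset.card_le_card (Finset.subset_inter h0 h1)
  · -- the union is 𝓕
    ext F
    simp only [Finset.mem_biUnion, Finset.mem_univ, Finset.mem_filter, true_and]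
    constructor
    · intro hF
      obtain ⟨A, hAM, hFA⟩ := hcov F hF
      obtain ⟨U, hUFA, hUcard⟩ := Finset.exists_subset_card_eq hFA
      have hUS : U ∈ S := by
        rw [hS, Finset.mem_biUnion]
        exact ⟨A, hAM, Finset.mem_powersetCard.mpr
          ⟨hUFA.trans (Finset.inter_subset_right), hUcard⟩⟩
      refine ⟨e ⟨U, hUS⟩, hF, ?_⟩
      rw [Equiv.symm_apply_apply]
      exact hUFA.trans (Finset.inter_subset_left)
    · rintro ⟨i, hF, -⟩
      exact hF
end
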